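/- arXiv:math/0612032 — 3 statements merged into one kernel-verified Lean document; each statement's English description precedes it below -/
import Mathlib

section
/- Let S be a ring with Jacobson radical rad(S), and let P be an invertible S-bimodule (i.e., there exists an S-bimodule P⁻¹ with P ⊗_S P⁻¹ ≅ S ≅ P⁻¹ ⊗_S P as bimodules). Then rad(S)·P = P·rad(S) as sub-bimodules of P. -/
open MulOpposite

/-- A Morita-context witness that the `S`-bimodule `P` (with right action encoded as an
`Sᵐᵒᵖ`-action) is invertible, with inverse bimodule `Q`: it consists of the two balanced
`S`-bilinear trace pairings `τ : P ⊗_S Q → S` and `σ : Q ⊗_S P → S` of an associative Morita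
context, both of which are surjective.  (A Morita context with both trace maps surjective is
exactly the datum of inverse bimodule isomorphisms `P ⊗_S Q ≅ S ≅ Q ⊗_S P`.) -/
structure InvertibleBimoduleWitness (S : Type u) [Ring S]
    (P : Type u) [AddCommGroup P] [Module S P] [Module Sᵐᵒᵖ P] [SMulCommClass S Sᵐᵒᵖ P]
    (Q : Type u) [AddCommGroup Q] [Module S Q] [Module Sᵐᵒᵖ Q] [SMulCommClass S Sᵐᵒᵖ Q] where
  τ : P → Q → S
  σ : Q → P → S
  τ_add_left : ∀ p p' q, τ (p + p') q = τ p q + τ p' q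
  τ_add_right : ∀ p q q', τ p (q + q') = τ p q + τ p q'
  σ_add_left : ∀ q q' p, σ (q + q') p = σ q p + σ q' p
  σ_add_right : ∀ q p p', σ q (p + p') = σ q p + σ q p'
  τ_smul_left : ∀ (s : S) p q, τ (s • p) q = s * τ p q
  τ_smul_right : ∀ (s : S) p q, τ p (op s • q) = τ p q * s
  τ_balanced : ∀ (s : S) p q, τ (op s • p) q = τ p (s • q)
  σ_smul_left : ∀ (s : S) q p, σ (s • q) p = s * σ q p
  σ_smul_right : ∀ (s : S) q p, σ q (op s • p) = σ q p * s
  σ_balanced : ∀ (s : S) q p, σ (op s • q) p = σ q (s • p)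
  assoc₁ : ∀ p q p', τ p q • p' = op (σ q p') • p
  assoc₂ : ∀ q p q', σ q p • q' = op (τ p q') • q
  τ_surj : ∃ (n : ℕ) (ps : Fin n → P) (qs : Fin n → Q), ∑ i, τ (ps i) (qs i) = 1
  σ_surj : ∃ (n : ℕ) (qs : Fin n → Q) (ps : Fin n → P), ∑ i, σ (qs i) (ps i) = 1

/-- Elements of the Jacobson radical are left quasi-regular: `1 - j` is left invertible. -/
lemma left_inv_of_mem_jacobson_bot {S : Type u} [Ring S] {j : S}
    (hj : j ∈ Ideal.jacobson (⊥ : Ideal S)) : ∃ u : S, u * (1 - j) = 1 := by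
  obtain ⟨z, hz⟩ := Ideal.mem_jacobson_iff.mp hj (-1)
  rw [Ideal.mem_bot] at hz
  refine ⟨z, ?_⟩
  have h1 : z * (1 - j) = z * -1 * j + z := by noncomm_ring
  rw [h1]
  exact sub_eq_zero.mp hz

/-- The Jacobson radical (intersection of maximal left ideals) is a two-sided ideal: it is
closed under right multiplication. -/
lemma mul_mem_jacobson_bot {S : Type u} [Ring S] {s : S}
    (hs : s ∈ Ideal.jacobson (⊥ : Ideal S)) (t : S) :
    s * t ∈ Ideal.jacobson (⊥ : Ideal S) := by
  rw [Ideal.mem_jacobson_iff] at hs ⊢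
  intro y
  obtain ⟨z, hz⟩ := hs (t * y)
  rw [Ideal.mem_bot] at hz
  have h1 : z * t * y * s + z = 1 := by
    have := sub_eq_zero.mp hz
    simpa [mul_assoc] using this
  refine ⟨1 - y * s * z * t, ?_⟩
  rw [Ideal.mem_bot]
  have expand : (1 - y * s * z * t) * y * (s * t) + (1 - y * s * z * t) - 1
      = y * s * t - y * s * (z * t * y * s + z) * t := by noncomm_ring
  rw [expand, h1, mul_one, sub_self]

namespace InvertibleBimoduleWitness

variable {S : Type u} [Ring S]
    {P : Type u} [AddCommGroup P] [Module S P] [Module Sᵐᵒᵖ P] [SMulCommClass S Sᵐᵒᵖ P]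
    {Q : Type u} [AddCommGroup Q] [Module S Q] [Module Sᵐᵒᵖ Q] [SMulCommClass S Sᵐᵒᵖ Q]
    (w : InvertibleBimoduleWitness S P Q)

lemma sigma_sub_right (q : Q) (a b : P) : w.σ q (a - b) = w.σ q a - w.σ q b := by
  have h := w.σ_add_right q b (a - b)
  rw [add_sub_cancel] at h
  rw [h, add_sub_cancel_left]

lemma tau_sub_right (p : P) (a b : Q) : w.τ p (a - b) = w.τ p a - w.τ p b := by
  have h := w.τ_add_right p b (a - b)
  rw [add_sub_cancel] at h
  rw [h, add_sub_cancel_left]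

/-- If `1 - τ(p̂,q')` is left invertible then so is `1 - σ(q',p̂)`
(the usual `1 - ab` vs `1 - ba` trick, formulated for the Morita pairings). -/
lemma left_inv_sigma (q' : Q) (ph : P) (h : ∃ u : S, u * (1 - w.τ ph q') = 1) :
    ∃ v : S, v * (1 - w.σ q' ph) = 1 := by
  obtain ⟨u, hu⟩ := h
  refine ⟨1 + w.σ q' (u • ph), ?_⟩
  have h1 : w.σ q' (u • ph) * w.σ q' ph = w.σ q' ((u * w.τ ph q') • ph) := by
    rw [← w.σ_smul_right, ← smul_comm u (op (w.σ q' ph)) ph, ← w.assoc₁ ph q' ph, smul_smul]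
  have h2 : (1 + w.σ q' (u • ph)) * (1 - w.σ q' ph)
      = 1 - w.σ q' ph + (w.σ q' (u • ph) - w.σ q' (u • ph) * w.σ q' ph) := by noncomm_ring
  rw [h2, h1, ← sigma_sub_right, ← sub_smul, ← mul_one_sub, hu, one_smul]
  abel

/-- If `1 - σ(q̂,p')` is left invertible then so is `1 - τ(p',q̂)`. -/
lemma left_inv_tau (p' : P) (qh : Q) (h : ∃ u : S, u * (1 - w.σ qh p') = 1) :
    ∃ v : S, v * (1 - w.τ p' qh) = 1 := by
  obtain ⟨u, hu⟩ := h
  refine ⟨1 + w.τ p' (u • qh), ?_⟩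
  have h1 : w.τ p' (u • qh) * w.τ p' qh = w.τ p' ((u * w.σ qh p') • qh) := by
    rw [← w.τ_smul_right, ← smul_comm u (op (w.τ p' qh)) qh, ← w.assoc₂ qh p' qh, smul_smul]
  have h2 : (1 + w.τ p' (u • qh)) * (1 - w.τ p' qh)
      = 1 - w.τ p' qh + (w.τ p' (u • qh) - w.τ p' (u • qh) * w.τ p' qh) := by noncomm_ring
  rw [h2, h1, ← tau_sub_right, ← sub_smul, ← mul_one_sub, hu, one_smul]
  abel

/-- `σ(q, s•p)` lies in the Jacobson radical whenever `s` does. -/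
lemma sigma_jac {s : S} (hs : s ∈ Ideal.jacobson (⊥ : Ideal S)) (q : Q) (p : P) :
    w.σ q (s • p) ∈ Ideal.jacobson (⊥ : Ideal S) := by
  rw [Ideal.mem_jacobson_iff]
  intro y
  have hj : w.τ (s • p) ((-y) • q) ∈ Ideal.jacobson (⊥ : Ideal S) := by
    rw [w.τ_smul_left]; exact mul_mem_jacobson_bot hs _
  obtain ⟨v, hv⟩ := left_inv_sigma w ((-y) • q) (s • p) (left_inv_of_mem_jacobson_bot hj)
  refine ⟨v, ?_⟩
  rw [Ideal.mem_bot]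
  rw [show (1:S) - w.σ ((-y) • q) (s • p) = 1 + y * w.σ q (s • p) by
    rw [w.σ_smul_left, neg_mul, sub_neg_eq_add]] at hv
  have h2 : v * y * w.σ q (s • p) + v - 1 = v * (1 + y * w.σ q (s • p)) - 1 := by noncomm_ring
  rw [h2, hv, sub_self]

/-- `τ(p, s•q)` lies in the Jacobson radical whenever `s` does. -/
lemma tau_jac {s : S} (hs : s ∈ Ideal.jacobson (⊥ : Ideal S)) (p : P) (q : Q) :
    w.τ p (s • q) ∈ Ideal.jacobson (⊥ : Ideal S) := by
  rw [Ideal.mem_jacobson_iff]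
  intro y
  have hj : w.σ (s • q) ((-y) • p) ∈ Ideal.jacobson (⊥ : Ideal S) := by
    rw [w.σ_smul_left]; exact mul_mem_jacobson_bot hs _
  obtain ⟨v, hv⟩ := left_inv_tau w ((-y) • p) (s • q) (left_inv_of_mem_jacobson_bot hj)
  refine ⟨v, ?_⟩
  rw [Ideal.mem_bot]
  rw [show (1:S) - w.τ ((-y) • p) (s • q) = 1 + y * w.τ p (s • q) by
    rw [w.τ_smul_left, neg_mul, sub_neg_eq_add]] at hv
  have h2 : v * y * w.τ p (s • q) + v - 1 = v * (1 + y * w.τ p (s • q)) - 1 := by noncomm_ring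
  rw [h2, hv, sub_self]

end InvertibleBimoduleWitness

/-- Let `S` be a ring with Jacobson radical `rad S` and let `P` be an
invertible `S`-bimodule.  Then `rad(S)·P = P·rad(S)` as sub-bimodules (additive subgroups)
of `P`. -/
theorem jacobson_smul_eq_smul_jacobson (S : Type u) [Ring S]
    (P : Type u) [AddCommGroup P] [Module S P] [Module Sᵐᵒᵖ P] [SMulCommClass S Sᵐᵒᵖ P]
    (Q : Type u) [AddCommGroup Q] [Module S Q] [Module Sᵐᵒᵖ Q] [SMulCommClass S Sᵐᵒᵖ Q]
    (w : InvertibleBimoduleWitness S P Q) :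
    AddSubgroup.closure {x : P | ∃ s ∈ Ideal.jacobson (⊥ : Ideal S), ∃ p : P, x = s • p}
      = AddSubgroup.closure
        {x : P | ∃ s ∈ Ideal.jacobson (⊥ : Ideal S), ∃ p : P, x = op s • p} := by
  refine le_antisymm ((AddSubgroup.closure_le _).mpr ?_) ((AddSubgroup.closure_le _).mpr ?_)
  · rintro x ⟨s, hs, p, rfl⟩
    obtain ⟨n, ps, qs, hsum⟩ := w.τ_surj
    have key : s • p = ∑ i, op (w.σ (qs i) (s • p)) • ps i := by
      calc s • p = (1:S) • (s • p) := (one_smul _ _).symm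
      _ = (∑ i, w.τ (ps i) (qs i)) • (s • p) := by rw [hsum]
      _ = ∑ i, w.τ (ps i) (qs i) • (s • p) := Finset.sum_smul
      _ = ∑ i, op (w.σ (qs i) (s • p)) • ps i :=
          Finset.sum_congr rfl fun i _ => w.assoc₁ (ps i) (qs i) (s • p)
    rw [key]
    exact AddSubgroup.sum_mem _ fun i _ => AddSubgroup.subset_closure
      ⟨w.σ (qs i) (s • p), w.sigma_jac hs _ _, ps i, rfl⟩
  · rintro x ⟨s, hs, p, rfl⟩
    obtain ⟨n, qs, ps, hsum⟩ := w.σ_surj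
    have key : op s • p = ∑ i, w.τ (op s • p) (qs i) • ps i := by
      calc op s • p = op (1:S) • (op s • p) := by rw [op_one, one_smul]
      _ = op (∑ i, w.σ (qs i) (ps i)) • (op s • p) := by rw [hsum]
      _ = (∑ i, op (w.σ (qs i) (ps i))) • (op s • p) := by rw [Finset.op_sum]
      _ = ∑ i, op (w.σ (qs i) (ps i)) • (op s • p) := Finset.sum_smul
      _ = ∑ i, w.τ (op s • p) (qs i) • ps i :=
          Finset.sum_congr rfl fun i _ => (w.assoc₁ (op s • p) (qs i) (ps i)).symm
    rw [key]
    refine AddSubgroup.sum_mem _ fun i _ => AddSubgroup.subset_closure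
      ⟨w.τ (op s • p) (qs i), ?_, ps i, ?_⟩
    · rw [w.τ_balanced]; exact w.tau_jac hs _ _
    · rfl
end

section
/- Let R be a commutative noetherian ring, let Δ be an R-algebra that is a finitely generated R-module, and let S be a simple left Δ-module of finite projective dimension u over Δ. Suppose every finitely generated projective Δ-module, viewed as an R-module, is Cohen–Macaulay of dimension d, and that S has finite length as an R-module with d > u. Then a contradiction arises; that is, no such simple module exists. Equivalently: if every simple Δ-module has finite length over R and Δ is Cohen–Macaulay of dimension d ≥ 1 over R, then every simple Δ-module of finite projective dimension has projective dimension at least d. -/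
universe u

/-- `pdLE A n M` : the left `A`-module `M` has projective dimension at most `n`. -/
def pdLE (A : Type u) [Ring A] : ℕ → ∀ (M : Type u) [AddCommGroup M] [Module A M], Prop
  | 0, M, _, _ => Module.Projective A M
  | n+1, M, _, _ => ∃ (P : Type u) (_ : AddCommGroup P) (_ : Module A P),
      Module.Projective A P ∧ ∃ f : P →ₗ[A] M, Function.Surjective f ∧
        pdLE A n (LinearMap.ker f)

section Aux

variable {R : Type u} [CommRing R]

/-- elementwise membership in `Ideal.span {r} • ⊤`. -/
lemma mem_singleton_smul_top {M : Type u} [AddCommGroup M] [Module R M] {r : R} {x : M} :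
    x ∈ (Ideal.span {r} • ⊤ : Submodule R M) ↔ ∃ y, x = r • y := by
  constructor
  · intro hx
    refine Submodule.smul_induction_on hx (fun s hs n _ => ?_) (fun a b ⟨ya, hya⟩ ⟨yb, hyb⟩ =>
      ⟨ya + yb, by rw [hya, hyb, smul_add]⟩)
    obtain ⟨c, hc⟩ := Ideal.mem_span_singleton'.mp hs
    exact ⟨c • n, by rw [← hc, mul_smul, smul_comm c r n]⟩
  · rintro ⟨y, rfl⟩
    exact Submodule.smul_mem_smul (Ideal.mem_span_singleton_self r) trivial

/-- membership in the span of a cons list. -/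
lemma mem_ofList_cons_smul_top {M : Type u} [AddCommGroup M] [Module R M] {r : R} {t : List R}
    {x : M} :
    x ∈ (Ideal.ofList (r :: t) • ⊤ : Submodule R M) ↔
      ∃ y z, z ∈ (Ideal.ofList t • ⊤ : Submodule R M) ∧ x = r • y + z := by
  rw [Ideal.ofList_cons, Submodule.sup_smul]
  constructor
  · intro hx
    obtain ⟨a, ha, b, hb, rfl⟩ := Submodule.mem_sup.mp hx
    obtain ⟨y, rfl⟩ := mem_singleton_smul_top.mp ha
    exact ⟨y, b, hb, rfl⟩
  · rintro ⟨y, z, hz, rfl⟩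
    exact Submodule.add_mem_sup (mem_singleton_smul_top.mpr ⟨y, rfl⟩) hz

lemma mem_ofList_concat_smul_top {M : Type u} [AddCommGroup M] [Module R M] {r : R} {t : List R}
    {x : M} :
    x ∈ (Ideal.ofList (t ++ [r]) • ⊤ : Submodule R M) ↔
      ∃ y z, z ∈ (Ideal.ofList t • ⊤ : Submodule R M) ∧ x = r • y + z := by
  rw [Ideal.ofList_append, Submodule.sup_smul]
  constructor
  · intro hx
    obtain ⟨a, ha, b, hb, rfl⟩ := Submodule.mem_sup.mp hx
    obtain ⟨y, z, hz, rfl⟩ := mem_ofList_cons_smul_top.mp hb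
    rw [Ideal.ofList_nil, Submodule.bot_smul, Submodule.mem_bot] at hz
    exact ⟨y, a, ha, by rw [hz, add_zero, add_comm]⟩
  · rintro ⟨y, z, hz, rfl⟩
    refine Submodule.mem_sup.mpr ⟨z, hz, r • y, ?_, add_comm z (r • y)⟩
    exact mem_ofList_cons_smul_top.mpr ⟨y, 0, by simp, by simp⟩

/-- spans are mapped into spans by linear maps. -/
lemma ofList_smul_top_map_mem {M N : Type u} [AddCommGroup M] [Module R M] [AddCommGroup N]
    [Module R N] (f : M →ₗ[R] N) {t : List R} {x : M}
    (hx : x ∈ (Ideal.ofList t • ⊤ : Submodule R M)) :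
    f x ∈ (Ideal.ofList t • ⊤ : Submodule R N) := by
  have := Submodule.smul_top_le_comap_smul_top (Ideal.ofList t) f hx
  exact this

/-- spans surject along surjective linear maps. -/
lemma ofList_smul_top_surj {M N : Type u} [AddCommGroup M] [Module R M] [AddCommGroup N]
    [Module R N] {f : M →ₗ[R] N} (hf : Function.Surjective f) {t : List R} {x : N}
    (hx : x ∈ (Ideal.ofList t • ⊤ : Submodule R N)) :
    ∃ y ∈ (Ideal.ofList t • ⊤ : Submodule R M), f y = x := by
  have : (Ideal.ofList t • ⊤ : Submodule R N) =
      Submodule.map f (Ideal.ofList t • ⊤ : Submodule R M) := by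
    rw [Submodule.map_smul'', Submodule.map_top, LinearMap.range_eq_top.mpr hf]
  rw [this] at hx
  obtain ⟨y, hy, hyx⟩ := hx
  exact ⟨y, hy, hyx⟩

end Aux
section Aux
variable {R : Type u} [CommRing R]

/-- Elementwise version of weak regularity of the sequence `t` on `M`. -/
def wreg (t : List R) (M : Type u) [AddCommGroup M] [Module R M] : Prop :=
  ∀ (j : ℕ) (h : j < t.length) (x : M),
    t[j] • x ∈ (Ideal.ofList (t.take j) • ⊤ : Submodule R M) →
      x ∈ (Ideal.ofList (t.take j) • ⊤ : Submodule R M)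

lemma wreg_of_isWeaklyRegular {t : List R} {M : Type u} [AddCommGroup M] [Module R M]
    (h : RingTheory.Sequence.IsWeaklyRegular M t) : wreg t M := by
  intro j hj x hx
  have hreg := h.regular_mod_prev j hj
  have h0 : (Submodule.Quotient.mk x : M ⧸ (Ideal.ofList (t.take j) • ⊤ : Submodule R M)) = 0 := by
    apply hreg
    show t[j] • (Submodule.Quotient.mk x) = t[j] • (0 : M ⧸ (Ideal.ofList (t.take j) • ⊤ : Submodule R M))
    rw [← Submodule.Quotient.mk_smul, smul_zero, Submodule.Quotient.mk_eq_zero]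
    exact hx
  rwa [Submodule.Quotient.mk_eq_zero] at h0

lemma wreg_prefix {t u : List R} {M : Type u} [AddCommGroup M] [Module R M]
    (h : wreg (t ++ u) M) : wreg t M := by
  intro j hj x hx
  have hj' : j < (t ++ u).length := by simp [List.length_append]; omega
  have e1 : (t ++ u)[j]'hj' = t[j] := List.getElem_append_left hj
  have e2 : (t ++ u).take j = t.take j := List.take_append_of_le_length (le_of_lt hj)
  have := h j hj' x (by rw [e1, e2]; exact hx)
  rwa [e2] at this

lemma wreg_last {t : List R} {r : R} {M : Type u} [AddCommGroup M] [Module R M]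
    (h : wreg (t ++ [r]) M) {x : M}
    (hx : r • x ∈ (Ideal.ofList t • ⊤ : Submodule R M)) :
    x ∈ (Ideal.ofList t • ⊤ : Submodule R M) := by
  have hj : t.length < (t ++ [r]).length := by simp
  have e1 : (t ++ [r])[t.length]'hj = r := by
    rw [List.getElem_append_right (le_refl t.length)]; simp
  have e2 : (t ++ [r]).take t.length = t := List.take_left
  have := h t.length hj x (by rw [e1, e2]; exact hx)
  rwa [e2] at this

end Aux

section Aux2
variable {R : Type u} [CommRing R] {Δ : Type u} [Ring Δ] [Algebra R Δ]

lemma mem_ofList_smul_top_finsupp {ρ : Type u} {t : List R} {f : ρ →₀ Δ} :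
    f ∈ (Ideal.ofList t • ⊤ : Submodule R (ρ →₀ Δ)) ↔
      ∀ p, f p ∈ (Ideal.ofList t • ⊤ : Submodule R Δ) := by
  constructor
  · intro hf p
    exact ofList_smul_top_map_mem (Finsupp.lapply p) hf
  · intro hf
    rw [← Finsupp.sum_single f]
    refine Submodule.sum_mem _ ?_
    intro p hp
    exact ofList_smul_top_map_mem (Finsupp.lsingle p) (hf p)

lemma wreg_finsupp {ρ : Type u} {t : List R} (h : wreg t Δ) : wreg t (ρ →₀ Δ) := by
  intro j hj f hf
  rw [mem_ofList_smul_top_finsupp]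
  intro p
  have : t[j] • f p ∈ (Ideal.ofList (t.take j) • ⊤ : Submodule R Δ) := by
    have := mem_ofList_smul_top_finsupp.mp hf p
    rwa [Finsupp.smul_apply] at this
  exact h j hj (f p) this

lemma wreg_projective {P : Type u} [AddCommGroup P] [Module Δ P] [Module R P]
    [IsScalarTower R Δ P] (hP : Module.Projective Δ P) {t : List R} (h : wreg t Δ) :
    wreg t P := by
  obtain ⟨s, hs⟩ := Module.projective_def.mp hP
  set g : (P →₀ Δ) →ₗ[Δ] P := Finsupp.linearCombination Δ id with hg
  have hgs : ∀ x : P, g (s x) = x := hs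
  intro j hj x hx
  have h1 : t[j] • s x ∈ (Ideal.ofList (t.take j) • ⊤ : Submodule R (P →₀ Δ)) := by
    have h0 := ofList_smul_top_map_mem (s.restrictScalars R) hx
    have e : s (t[j] • x) = t[j] • s x := by
      rw [← algebraMap_smul Δ (t[j]) x, map_smul, algebraMap_smul]
    rwa [LinearMap.restrictScalars_apply, e] at h0
  have h2 := wreg_finsupp (ρ := P) h j hj (s x) h1
  have h3 := ofList_smul_top_map_mem (g.restrictScalars R) h2
  simpa [hgs x] using h3

end Aux2

section Syz
variable {R : Type u} [CommRing R] {Δ : Type u} [Ring Δ] [Algebra R Δ]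
variable {P M : Type u} [AddCommGroup P] [Module Δ P] [Module R P] [IsScalarTower R Δ P]
  [AddCommGroup M] [Module Δ M] [Module R M] [IsScalarTower R Δ M]

lemma syzygy_mem (f : P →ₗ[Δ] M) (hf : Function.Surjective f) (t : List R) (hW : wreg t M)
    (x : ↥(LinearMap.ker f)) (hx : (x : P) ∈ (Ideal.ofList t • ⊤ : Submodule R P)) :
    x ∈ (Ideal.ofList t • ⊤ : Submodule R ↥(LinearMap.ker f)) := by
  set fR : P →ₗ[R] M := f.restrictScalars R with hfR
  have hfRs : Function.Surjective fR := hf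
  induction t using List.reverseRecOn generalizing x with
  | nil =>
    rw [Ideal.ofList_nil, Submodule.bot_smul, Submodule.mem_bot] at hx ⊢
    exact Subtype.ext hx
  | append_singleton t' r IH =>
    obtain ⟨y, z, hz, hxe⟩ := mem_ofList_concat_smul_top.mp hx
    have hfx : fR ↑x = 0 := x.2
    have h1 : r • fR y ∈ (Ideal.ofList t' • ⊤ : Submodule R M) := by
      have e : r • fR y = -(fR z) := by
        have := congrArg fR hxe
        rw [hfx, map_add, map_smul] at this
        exact eq_neg_of_add_eq_zero_left this.symm
      rw [e]
      exact Submodule.neg_mem _ (ofList_smul_top_map_mem fR hz)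
    have h2 : fR y ∈ (Ideal.ofList t' • ⊤ : Submodule R M) := wreg_last hW h1
    obtain ⟨w, hw, hwy⟩ := ofList_smul_top_surj hfRs h2
    have hk1 : y - w ∈ LinearMap.ker f := by
      have : fR (y - w) = 0 := by rw [map_sub, hwy, sub_self]
      exact this
    have hu : z + r • w ∈ (Ideal.ofList t' • ⊤ : Submodule R P) :=
      Submodule.add_mem _ hz (Submodule.smul_mem _ r hw)
    have hfu : z + r • w ∈ LinearMap.ker f := by
      have : fR (z + r • w) = 0 := by
        have := congrArg fR hxe
        rw [hfx, map_add, map_smul] at this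
        rw [map_add, map_smul, hwy, add_comm]
        exact this.symm
      exact this
    set U : ↥(LinearMap.ker f) := ⟨z + r • w, hfu⟩ with hU
    set K₁ : ↥(LinearMap.ker f) := ⟨y - w, hk1⟩ with hK₁
    have hUm : U ∈ (Ideal.ofList t' • ⊤ : Submodule R ↥(LinearMap.ker f)) :=
      IH (wreg_prefix hW) U hu
    refine mem_ofList_concat_smul_top.mpr ⟨K₁, U, hUm, ?_⟩
    apply Subtype.ext
    show (x : P) = ↑(r • K₁) + ↑U
    rw [hxe]
    have : ((r • K₁ : ↥(LinearMap.ker f)) : P) = r • (y - w) := rfl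
    rw [this]
    show r • y + z = r • (y - w) + (z + r • w)
    module

end Syz


section Main
variable {R : Type u} [CommRing R] [IsLocalRing R] {Δ : Type u} [Ring Δ] [Algebra R Δ]

lemma main_induction (rs : List R) (hWΔ : wreg rs Δ)
    (hm : ∀ r ∈ rs, r ∈ IsLocalRing.maximalIdeal R) (n : ℕ) :
    ∀ (M : Type u) [AddCommGroup M] [Module R M] [Module Δ M] [IsScalarTower R Δ M],
      pdLE Δ n M → ∀ a b : List R, a ++ b = rs → n < b.length → wreg a M →
      ∀ x : M, x ∉ (Ideal.ofList a • ⊤ : Submodule R M) →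
        (∀ s ∈ IsLocalRing.maximalIdeal R,
          s • x ∈ (Ideal.ofList a • ⊤ : Submodule R M)) → False := by
  induction n with
  | zero =>
    intro M _ _ _ _ hpd a b hab hlt hWa x hx hmx
    cases b with
    | nil => simp at hlt
    | cons r b' =>
      have hproj : Module.Projective Δ M := hpd
      have hrsplit : (a ++ [r]) ++ b' = rs := by rw [← hab]; simp
      have hWarΔ : wreg (a ++ [r]) Δ := wreg_prefix (hrsplit ▸ hWΔ)
      have hWarM : wreg (a ++ [r]) M := wreg_projective hproj hWarΔ
      have hrm : r ∈ IsLocalRing.maximalIdeal R := hm r (by rw [← hab]; simp)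
      exact hx (wreg_last hWarM (hmx r hrm))
  | succ n IH =>
    intro M _ _ _ _ hpd a b hab hlt hWa x hx hmx
    obtain ⟨P, _, _, hPproj, f, hf, hker⟩ := hpd
    letI : Module R P := Module.compHom P (algebraMap R Δ)
    haveI : IsScalarTower R Δ P := ⟨fun r δ p => by
      show (r • δ) • p = algebraMap R Δ r • (δ • p)
      rw [Algebra.smul_def, mul_smul]⟩
    cases b with
    | nil => simp at hlt
    | cons r b' =>
      set K := LinearMap.ker f with hK
      set fR : P →ₗ[R] M := f.restrictScalars R with hfR
      have hfRs : Function.Surjective fR := hf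
      set ι : ↥K →ₗ[R] P := (K.subtype).restrictScalars R with hι
      have hrsplit : (a ++ [r]) ++ b' = rs := by rw [← hab]; simp
      have hWarΔ : wreg (a ++ [r]) Δ := wreg_prefix (hrsplit ▸ hWΔ)
      have hWarP : wreg (a ++ [r]) P := wreg_projective hPproj hWarΔ
      have hrm : r ∈ IsLocalRing.maximalIdeal R := hm r (by rw [← hab]; simp)
      obtain ⟨p, hp⟩ := hf x
      have hrx : r • x ∈ (Ideal.ofList a • ⊤ : Submodule R M) := hmx r hrm
      obtain ⟨w, hw, hfw⟩ := ofList_smul_top_surj hfRs hrx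
      have hx'K : r • p - w ∈ K := by
        have : fR (r • p - w) = 0 := by
          rw [map_sub, map_smul, hfw]
          show r • f p - r • x = 0
          rw [hp, sub_self]
        exact this
      set X' : ↥K := ⟨r • p - w, hx'K⟩ with hX'
      -- weak regularity of a ++ [r] on the kernel
      have hWarK : wreg (a ++ [r]) ↥K := by
        intro j hj k hk
        have hjle : j ≤ a.length := by
          simp only [List.length_append, List.length_singleton] at hj; omega
        have e2 : (a ++ [r]).take j = a.take j := List.take_append_of_le_length hjle
        have hWaj : wreg (a.take j) M := by
          have : a.take j ++ a.drop j = a := List.take_append_drop j a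
          exact wreg_prefix (M := M) (this ▸ hWa)
        rw [e2] at hk ⊢
        have h1 : (a ++ [r])[j] • (k : P) ∈ (Ideal.ofList (a.take j) • ⊤ : Submodule R P) := by
          have := ofList_smul_top_map_mem ι hk
          rwa [map_smul] at this
        have h2 : (k : P) ∈ (Ideal.ofList (a.take j) • ⊤ : Submodule R P) := by
          have := hWarP j hj (k : P) (by rw [e2]; exact h1)
          rwa [e2] at this
        exact syzygy_mem f hf (a.take j) hWaj k h2
      -- X' is not in the span
      have hX'notin : X' ∉ (Ideal.ofList (a ++ [r]) • ⊤ : Submodule R ↥K) := by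
        intro hmem
        obtain ⟨Y, Z, hZ, hXe⟩ := mem_ofList_concat_smul_top.mp hmem
        have hZP : (Z : P) ∈ (Ideal.ofList a • ⊤ : Submodule R P) := ofList_smul_top_map_mem ι hZ
        have hcoe : r • p - w = r • (Y : P) + (Z : P) := congrArg Subtype.val hXe
        have hmem2 : r • (p - (Y : P)) ∈ (Ideal.ofList a • ⊤ : Submodule R P) := by
          have e : r • (p - (Y : P)) = (Z : P) + w := by
            have := hcoe
            linear_combination (norm := module) this
          rw [e]; exact Submodule.add_mem _ hZP hw
        have hpY : p - (Y : P) ∈ (Ideal.ofList a • ⊤ : Submodule R P) := wreg_last hWarP hmem2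
        apply hx
        have := ofList_smul_top_map_mem fR hpY
        have e : fR (p - (Y : P)) = x := by
          have hY0 : f (Y : P) = 0 := Y.2
          show f (p - (Y : P)) = x
          rw [map_sub, hY0, hp, sub_zero]
        rwa [e] at this
      -- the maximal ideal multiplies X' into the span
      have hX'm : ∀ s ∈ IsLocalRing.maximalIdeal R,
          s • X' ∈ (Ideal.ofList (a ++ [r]) • ⊤ : Submodule R ↥K) := by
        intro s hs
        have hsx : s • x ∈ (Ideal.ofList a • ⊤ : Submodule R M) := hmx s hs
        obtain ⟨u, hu, hfu⟩ := ofList_smul_top_surj hfRs hsx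
        have hκK : s • p - u ∈ K := by
          have : fR (s • p - u) = 0 := by
            rw [map_sub, map_smul, hfu]
            show s • f p - s • x = 0
            rw [hp, sub_self]
          exact this
        have hvP : r • u - s • w ∈ (Ideal.ofList a • ⊤ : Submodule R P) :=
          Submodule.sub_mem _ (Submodule.smul_mem _ r hu) (Submodule.smul_mem _ s hw)
        have hvK : r • u - s • w ∈ K := by
          have : fR (r • u - s • w) = 0 := by
            rw [map_sub, map_smul, map_smul, hfu, hfw, smul_comm, sub_self]
          exact this
        have hVm : (⟨r • u - s • w, hvK⟩ : ↥K) ∈ (Ideal.ofList a • ⊤ : Submodule R ↥K) :=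
          syzygy_mem f hf a hWa _ hvP
        refine mem_ofList_concat_smul_top.mpr ⟨⟨s • p - u, hκK⟩, ⟨r • u - s • w, hvK⟩, hVm, ?_⟩
        apply Subtype.ext
        show s • (r • p - w) = r • (s • p - u) + (r • u - s • w)
        module
      exact IH ↥K hker (a ++ [r]) b' hrsplit (by simpa using hlt) hWarK X' hX'notin hX'm

end Main

/-- Let `R` be a commutative noetherian local ring and `Δ` an `R`-algebra,
finitely generated as an `R`-module, which is Cohen–Macaulay of dimension `d ≥ 1` as an
`R`-module (it admits a regular sequence of length `d` in the maximal ideal, and its support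
has Krull dimension `d`).  If every simple left `Δ`-module has finite length over `R`, then
every simple left `Δ`-module of finite projective dimension has projective dimension at
least `d`. -/
theorem simple_pd_ge_of_CM (R : Type u) [CommRing R] [IsNoetherianRing R] [IsLocalRing R]
    (Δ : Type u) [Ring Δ] [Algebra R Δ] [Module.Finite R Δ]
    (d : ℕ) (hd : 1 ≤ d)
    (hdepth : ∃ rs : List R, rs.length = d ∧ (∀ r ∈ rs, r ∈ IsLocalRing.maximalIdeal R) ∧
      RingTheory.Sequence.IsRegular Δ rs)
    (hdim : ringKrullDim (R ⧸ Module.annihilator R Δ) = ((d : ℕ) : WithBot (WithTop ℕ)))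
    (hlen : ∀ (M : Type u) [AddCommGroup M] [Module R M] [Module Δ M] [IsScalarTower R Δ M],
      IsSimpleModule Δ M → IsFiniteLength R M) :
    ∀ (M : Type u) [AddCommGroup M] [Module R M] [Module Δ M] [IsScalarTower R Δ M],
      IsSimpleModule Δ M → ∀ n : ℕ, pdLE Δ n M → d ≤ n := by
  intro M _ _ _ _ hsimp n hpd
  by_contra hnd
  push_neg at hnd
  obtain ⟨rs, hlen_rs, hm, hreg⟩ := hdepth
  -- a nonzero element
  haveI : Nontrivial M := IsSimpleModule.nontrivial Δ M
  obtain ⟨x₀, hx₀⟩ := exists_ne (0 : M)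
  -- commutation of scalars
  have hcomm : ∀ (s : R) (δ : Δ) (y : M), δ • s • y = s • δ • y := by
    intro s δ y
    rw [← algebraMap_smul Δ s y, ← mul_smul, ← Algebra.commutes, mul_smul,
      algebraMap_smul]
  -- mM is a Δ-submodule
  set N : Submodule Δ M :=
    { carrier := (IsLocalRing.maximalIdeal R • ⊤ : Submodule R M)
      add_mem' := fun ha hb => Submodule.add_mem _ ha hb
      zero_mem' := Submodule.zero_mem _
      smul_mem' := fun δ x hx => by
        refine Submodule.smul_induction_on (p := fun z => δ • z ∈
          (IsLocalRing.maximalIdeal R • ⊤ : Submodule R M)) hx (fun s hs y _ => ?_)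
          (fun a b ha hb => by
            show δ • (a + b) ∈ (IsLocalRing.maximalIdeal R • ⊤ : Submodule R M)
            rw [smul_add]; exact Submodule.add_mem _ ha hb)
        show δ • (s • y) ∈ (IsLocalRing.maximalIdeal R • ⊤ : Submodule R M)
        rw [hcomm]
        exact Submodule.smul_mem_smul hs trivial } with hN
  -- M is cyclic, hence finite over R
  have hφ : Function.Surjective (fun δ : Δ => δ • x₀) := by
    intro y
    rcases eq_bot_or_eq_top (Submodule.span Δ {x₀}) with hsp | hsp
    · exfalso
      apply hx₀
      have := Submodule.mem_span_singleton_self (R := Δ) x₀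
      rw [hsp] at this
      simpa using this
    · have : y ∈ Submodule.span Δ {x₀} := by rw [hsp]; trivial
      exact Submodule.mem_span_singleton.mp this
  -- every element of the maximal ideal kills M
  have mM0 : ∀ s ∈ IsLocalRing.maximalIdeal R, ∀ y : M, s • y = 0 := by
    rcases eq_bot_or_eq_top N with hNb | hNt
    · intro s hs y
      have h1 : s • y ∈ N :=
        show s • y ∈ (IsLocalRing.maximalIdeal R • ⊤ : Submodule R M) from
          Submodule.smul_mem_smul hs trivial
      rw [hNb] at h1
      simpa using h1
    · exfalso
      set φ : Δ →ₗ[R] M :=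
        { toFun := fun δ => δ • x₀
          map_add' := fun a b => add_smul a b x₀
          map_smul' := fun r δ => by simp [smul_assoc] } with hφdef
      haveI : Module.Finite R M := Module.Finite.of_surjective φ hφ
      have hfg : (⊤ : Submodule R M).FG := Module.Finite.fg_top
      have hle : (⊤ : Submodule R M) ≤ IsLocalRing.maximalIdeal R • ⊤ := by
        intro y _
        have h1 : y ∈ N := by rw [hNt]; trivial
        exact h1
      have hbot := Submodule.eq_bot_of_le_smul_of_le_jacobson_bot
        (IsLocalRing.maximalIdeal R) ⊤ hfg hle
        (le_of_eq (IsLocalRing.jacobson_eq_maximalIdeal ⊥ bot_ne_top).symm)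
      apply hx₀
      have : x₀ ∈ (⊤ : Submodule R M) := trivial
      rw [hbot] at this
      simpa using this
  -- apply the main induction
  exact main_induction rs (wreg_of_isWeaklyRegular hreg.toIsWeaklyRegular) hm n M hpd
    [] rs rfl (by rw [hlen_rs]; omega) (fun j hj => by simp at hj) x₀
    (by rw [Ideal.ofList_nil, Submodule.bot_smul]; simpa using hx₀)
    (fun s hs => by rw [mM0 s hs x₀]; exact Submodule.zero_mem _)
end

section
/- Let F be a field of characteristic 2 and let C = F[u,v,x,y]/(x + u² + x²u, y + v² + y²v). Define σ: C → C by σ(u) = u + x², σ(v) = v + y², σ(x) = x, σ(y) = y. Then σ is a ring automorphism of C of order 2. -/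
noncomputable section

open MvPolynomial

universe u

variable (F : Type u) [Field F]

/-- The ideal `(x + u² + x²u, y + v² + y²v)` of `F[u,v,x,y]`, where the variables
`u, v, x, y` are `X 0, X 1, X 2, X 3`. -/
def relIdeal : Ideal (MvPolynomial (Fin 4) F) :=
  Ideal.span {X 2 + X 0 ^ 2 + X 2 ^ 2 * X 0, X 3 + X 1 ^ 2 + X 3 ^ 2 * X 1}

/-- The ring `C = F[u,v,x,y]/(x + u² + x²u, y + v² + y²v)`. -/
def Cring := MvPolynomial (Fin 4) F ⧸ relIdeal F

instance : CommRing (Cring F) := Ideal.Quotient.commRing _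

/-- The class of a polynomial in `C`. -/
def cls : MvPolynomial (Fin 4) F →+* Cring F := Ideal.Quotient.mk (relIdeal F)

/-- The substitution endomorphism. -/
def tauHom : MvPolynomial (Fin 4) F →+* MvPolynomial (Fin 4) F :=
  (aeval ![X 0 + X 2 ^ 2, X 1 + X 3 ^ 2, X 2, X 3] : MvPolynomial (Fin 4) F →ₐ[F] MvPolynomial (Fin 4) F).toRingHom

lemma tauHom_X0 : tauHom F (X 0) = X 0 + X 2 ^ 2 := by simp [tauHom]
lemma tauHom_X1 : tauHom F (X 1) = X 1 + X 3 ^ 2 := by simp [tauHom]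
lemma tauHom_X2 : tauHom F (X 2) = X 2 := by simp [tauHom]
lemma tauHom_X3 : tauHom F (X 3) = X 3 := by simp [tauHom]

section CharTwoStuff
variable [CharP F 2]

lemma tauHom_gen1 : tauHom F (X 2 + X 0 ^ 2 + X 2 ^ 2 * X 0) = X 2 + X 0 ^ 2 + X 2 ^ 2 * X 0 := by
  have h : ((X 0 + X 2 ^ 2 : MvPolynomial (Fin 4) F)) ^ 2 = X 0 ^ 2 + (X 2 ^ 2) ^ 2 :=
    CharTwo.add_sq _ _
  simp only [map_add, map_pow, map_mul, tauHom_X0, tauHom_X2, h]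
  ring_nf
  rw [show ((2:MvPolynomial (Fin 4) F)) = 0 from CharTwo.two_eq_zero, mul_zero, add_zero]

lemma tauHom_gen2 : tauHom F (X 3 + X 1 ^ 2 + X 3 ^ 2 * X 1) = X 3 + X 1 ^ 2 + X 3 ^ 2 * X 1 := by
  have h : ((X 1 + X 3 ^ 2 : MvPolynomial (Fin 4) F)) ^ 2 = X 1 ^ 2 + (X 3 ^ 2) ^ 2 :=
    CharTwo.add_sq _ _
  simp only [map_add, map_pow, map_mul, tauHom_X1, tauHom_X3, h]
  ring_nf
  rw [show ((2:MvPolynomial (Fin 4) F)) = 0 from CharTwo.two_eq_zero, mul_zero, add_zero]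

end CharTwoStuff

lemma tauHom_mem [CharP F 2] {p : MvPolynomial (Fin 4) F} (hp : p ∈ relIdeal F) :
    tauHom F p ∈ relIdeal F := by
  have h := Ideal.mem_map_of_mem (tauHom F) hp
  rw [relIdeal, Ideal.map_span] at h
  refine Ideal.span_le.mpr ?_ h
  rintro q hq
  simp only [Set.image_insert_eq, Set.image_singleton, Set.mem_insert_iff,
    Set.mem_singleton_iff] at hq
  rcases hq with rfl | rfl
  · rw [tauHom_gen1]
    exact Ideal.subset_span (by simp)
  · rw [tauHom_gen2]
    exact Ideal.subset_span (by simp)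

/-- The induced endomorphism of `C`. -/
def phi [CharP F 2] : Cring F →+* Cring F :=
  Ideal.Quotient.lift (relIdeal F) ((cls F).comp (tauHom F)) (fun a ha => by
    rw [RingHom.comp_apply]
    exact Ideal.Quotient.eq_zero_iff_mem.mpr (tauHom_mem F ha))

lemma phi_cls [CharP F 2] (p : MvPolynomial (Fin 4) F) : phi F (cls F p) = cls F (tauHom F p) :=
  Ideal.Quotient.lift_mk _ _ _

lemma phi_phi [CharP F 2] : (phi F).comp (phi F) = RingHom.id (Cring F) := by
  refine Ideal.Quotient.ringHom_ext ?_
  refine MvPolynomial.ringHom_ext (fun r => ?_) (fun i => ?_)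
  · show phi F (phi F (cls F (C r))) = cls F (C r)
    simp [phi_cls, tauHom]
  · show phi F (phi F (cls F (X i))) = cls F (X i)
    have key : ∀ p : MvPolynomial (Fin 4) F, tauHom F (tauHom F p) = p →
        phi F (phi F (cls F p)) = cls F p := fun p hp => by
      rw [phi_cls, phi_cls, hp]
    fin_cases i <;> refine key _ ?_ <;>
      simp only [show ((⟨0, by norm_num⟩ : Fin 4)) = 0 from rfl,
        show ((⟨1, by norm_num⟩ : Fin 4)) = 1 from rfl,
        show ((⟨2, by norm_num⟩ : Fin 4)) = 2 from rfl,
        show ((⟨3, by norm_num⟩ : Fin 4)) = 3 from rfl,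
        map_add, map_pow, tauHom_X0, tauHom_X1, tauHom_X2, tauHom_X3] <;>
      rw [add_assoc, CharTwo.add_self_eq_zero, add_zero]

/-- σ as a ring automorphism. -/
def sigma [CharP F 2] : Cring F ≃+* Cring F :=
  RingEquiv.ofRingHom (phi F) (phi F) (phi_phi F) (phi_phi F)

lemma sigma_apply [CharP F 2] (c : Cring F) : sigma F c = phi F c := rfl

lemma sq_ne_zero [CharP F 2] : cls F (X 2 ^ 2) ≠ 0 := by
  classical
  set K := AlgebraicClosure F
  obtain ⟨ω, hω⟩ := IsAlgClosed.exists_root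
    (p := (Polynomial.X ^ 2 + Polynomial.X + 1 : Polynomial K)) (by
      intro h
      have : (Polynomial.X ^ 2 + Polynomial.X + 1 : Polynomial K).degree = 2 := by
        compute_degree!
      simp [this] at h)
  have hω' : ω ^ 2 + ω + 1 = 0 := by
    simpa using hω
  have hωne : ω ≠ 0 := by
    intro h; rw [h] at hω'; simp at hω'
  have hchar : CharP K 2 := inferInstance
  set ev : MvPolynomial (Fin 4) F →+* K :=
    (aeval ![1, 1, ω, ω] : MvPolynomial (Fin 4) F →ₐ[F] K).toRingHom with hev
  have hgen1 : ev (X 2 + X 0 ^ 2 + X 2 ^ 2 * X 0) = 0 := by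
    simp only [hev, AlgHom.toRingHom_eq_coe, RingHom.coe_coe, map_add, map_pow, map_mul,
      aeval_X]
    show ω + (1:K) ^ 2 + ω ^ 2 * 1 = 0
    rw [one_pow, mul_one, ← hω']
    ring
  have hgen2 : ev (X 3 + X 1 ^ 2 + X 3 ^ 2 * X 1) = 0 := by
    simp only [hev, AlgHom.toRingHom_eq_coe, RingHom.coe_coe, map_add, map_pow, map_mul,
      aeval_X]
    show ω + (1:K) ^ 2 + ω ^ 2 * 1 = 0
    rw [one_pow, mul_one, ← hω']
    ring
  have hvanish : ∀ a ∈ relIdeal F, ev a = 0 := by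
    intro a ha
    rw [relIdeal, Ideal.mem_span_pair] at ha
    obtain ⟨p, q, rfl⟩ := ha
    rw [map_add, map_mul, map_mul, hgen1, hgen2, mul_zero, mul_zero, add_zero]
  set psi : Cring F →+* K := Ideal.Quotient.lift (relIdeal F) ev hvanish with hpsi
  intro h
  have : ev (X 2 ^ 2) = 0 := by
    have h1 : psi (cls F (X 2 ^ 2)) = ev (X 2 ^ 2) := Ideal.Quotient.lift_mk _ _ _
    rw [← h1, h, map_zero]
  simp only [hev, AlgHom.toRingHom_eq_coe, RingHom.coe_coe, map_pow, aeval_X] at this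
  have : ω = 0 := by
    have h2 : ω ^ 2 = 0 := by simpa using this
    exact pow_eq_zero_iff (n := 2) (by norm_num) |>.mp h2
  exact hωne this

lemma sigma_ne_one [CharP F 2] : sigma F ≠ 1 := by
  intro h
  have h0 : sigma F (cls F (X 0)) = cls F (X 0) := by rw [h]; rfl
  rw [sigma_apply, phi_cls, tauHom_X0, map_add] at h0
  have : cls F (X 2 ^ 2) = 0 := by
    have := sub_eq_zero.mpr h0
    rw [add_sub_cancel_left] at this
    exact this
  exact sq_ne_zero F this

/-- Let `F` be a field of characteristic `2` and
`C = F[u,v,x,y]/(x + u² + x²u, y + v² + y²v)`.  There is a ring automorphism `σ` of `C` of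
order `2` with `σ(u) = u + x²`, `σ(v) = v + y²`, `σ(x) = x` and `σ(y) = y`. -/
theorem exists_order_two_automorphism [CharP F 2] :
    ∃ σ : Cring F ≃+* Cring F,
      σ (cls F (X 0)) = cls F (X 0 + X 2 ^ 2) ∧
      σ (cls F (X 1)) = cls F (X 1 + X 3 ^ 2) ∧
      σ (cls F (X 2)) = cls F (X 2) ∧
      σ (cls F (X 3)) = cls F (X 3) ∧
      orderOf σ = 2 := by
  refine ⟨sigma F, ?_, ?_, ?_, ?_, ?_⟩
  · rw [sigma_apply, phi_cls, tauHom_X0]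
  · rw [sigma_apply, phi_cls, tauHom_X1]
  · rw [sigma_apply, phi_cls, tauHom_X2]
  · rw [sigma_apply, phi_cls, tauHom_X3]
  · refine orderOf_eq_prime ?_ (sigma_ne_one F)
    ext c
    show sigma F (sigma F c) = c
    rw [sigma_apply, sigma_apply]
    exact RingHom.congr_fun (phi_phi F) c

end
end
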